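/- Let Z be a nonempty finite type and P : Z → Z → ℝ a row-stochastic matrix that is irreducible. Then there exist a natural number t₀, a real α > 0, and a real β with 0 < β < 1 such that for all states u, v ∈ Z and all t ≥ t₀, the sum of Prob(x) over all paths x of length t with x₀ = u and x_i ≠ v for all 0 ≤ i ≤ t is at most β^(α·t). -/
import Mathlib


open scoped Classical

/-- Probability of a path `x = (x₀, …, x_m)` of length `m`:
`Prob(x) = ∏_{i=1}^m P(x_{i-1}, x_i)`. -/
def pathProb {Z : Type*} (P : Z → Z → ℝ) {m : ℕ} (x : Fin (m + 1) → Z) : ℝ :=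
  ∏ i : Fin m, P (x i.castSucc) (x i.succ)

/-- `P` is a row-stochastic matrix. -/
def RowStochastic {Z : Type*} [Fintype Z] (P : Z → Z → ℝ) : Prop :=
  (∀ a b, 0 ≤ P a b) ∧ ∀ a, ∑ b, P a b = 1

/-- The chain is irreducible: for all `a b` there is `m ≥ 1` with `(P^m)(a,b) > 0`. -/
def IsIrreducibleChain {Z : Type*} [Fintype Z] [DecidableEq Z] (P : Z → Z → ℝ) : Prop :=
  ∀ a b : Z, ∃ m : ℕ, 1 ≤ m ∧ 0 < (Matrix.of P ^ m) a b

noncomputable def fAvoid {Z : Type*} [Fintype Z] (P : Z → Z → ℝ) (t : ℕ) (u v : Z) : ℝ :=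
  ∑ x ∈ Finset.univ.filter
      (fun x : Fin (t + 1) → Z => x 0 = u ∧ ∀ i, x i ≠ v),
    pathProb P x

lemma pathProb_cons {Z : Type*} (P : Z → Z → ℝ) {t : ℕ} (a : Z) (y : Fin (t + 1) → Z) :
    pathProb P (Fin.cons a y : Fin (t + 1 + 1) → Z) = P a (y 0) * pathProb P y := by
  simp [pathProb, Fin.prod_univ_succ, ← Fin.succ_castSucc, Fin.cons_succ, Fin.cons_zero,
    Fin.castSucc_zero]

lemma fAvoid_self {Z : Type*} [Fintype Z] (P : Z → Z → ℝ) (t : ℕ) (v : Z) :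
    fAvoid P t v v = 0 := by
  rw [fAvoid, Finset.sum_filter]
  refine Finset.sum_eq_zero fun x _ => ?_
  rw [if_neg]
  rintro ⟨h0, hav⟩
  exact hav 0 h0

lemma fAvoid_zero {Z : Type*} [Fintype Z] (P : Z → Z → ℝ) (u v : Z) (h : u ≠ v) :
    fAvoid P 0 u v = 1 := by
  rw [fAvoid, Finset.sum_filter]
  rw [Fintype.sum_equiv (Equiv.funUnique (Fin 1) Z)
    (fun x : Fin 1 → Z => if x 0 = u ∧ ∀ i, x i ≠ v then pathProb P x else 0)
    (fun z => if z = u ∧ z ≠ v then (1:ℝ) else 0) ?_]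
  · classical
    rw [show (fun z => if z = u ∧ z ≠ v then (1:ℝ) else 0)
        = (fun z => if z = u then (1:ℝ) else 0) from by
      funext z
      by_cases hz : z = u
      · subst hz; simp [h]
      · simp [hz]]
    simp
  · intro x
    have h2 : pathProb P x = 1 := by simp [pathProb]
    have h1 : (∀ i : Fin 1, x i ≠ v) ↔ (x default ≠ v) :=
      ⟨fun H => H default, fun H i => by rw [Subsingleton.elim i default]; exact H⟩
    simp only [Equiv.funUnique_apply, h2, h1, show x 0 = x default from rfl]

lemma fAvoid_succ {Z : Type*} [Fintype Z] (P : Z → Z → ℝ) {t : ℕ} {u v : Z} (h : u ≠ v) :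
    fAvoid P (t + 1) u v = ∑ w, P u w * fAvoid P t w v := by
  have lhs : fAvoid P (t + 1) u v
      = ∑ y : Fin (t + 1) → Z,
          if (∀ i, y i ≠ v) then P u (y 0) * pathProb P y else 0 := by
    rw [fAvoid, Finset.sum_filter]
    rw [← Equiv.sum_comp (Fin.consEquiv (fun _ => Z))
      (fun x : Fin (t + 1 + 1) → Z =>
        if x 0 = u ∧ ∀ i, x i ≠ v then pathProb P x else 0)]
    rw [Fintype.sum_prod_type]
    have key : ∀ (a : Z) (y : Fin (t + 1) → Z),
        (if (Fin.cons a y : Fin (t + 1 + 1) → Z) 0 = u ∧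
            (∀ i, (Fin.cons a y : Fin (t + 1 + 1) → Z) i ≠ v)
          then pathProb P (Fin.cons a y : Fin (t + 1 + 1) → Z) else 0)
        = if a = u then (if (∀ i, y i ≠ v) then P u (y 0) * pathProb P y else 0) else 0 := by
      intro a y
      by_cases ha : a = u
      · by_cases hy : ∀ i, y i ≠ v
        · have hc : (Fin.cons a y : Fin (t + 1 + 1) → Z) 0 = u ∧
              ∀ i, (Fin.cons a y : Fin (t + 1 + 1) → Z) i ≠ v := by
            constructor
            · simpa using ha
            · rw [Fin.forall_fin_succ]
              exact ⟨by simpa using (show a ≠ v by rw [ha]; exact h),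
                fun i => by simpa using hy i⟩
          rw [if_pos hc, if_pos ha, if_pos hy, pathProb_cons, ha]
        · rw [if_neg, if_pos ha, if_neg hy]
          rintro ⟨-, H⟩
          exact hy fun i => by simpa using H i.succ
      · rw [if_neg, if_neg ha]
        rintro ⟨h0, -⟩
        exact ha (by simpa using h0)
    simp_rw [show ∀ (p : Z × (Fin (t + 1) → Z)),
        (Fin.consEquiv (fun _ => Z)) p = (Fin.cons p.1 p.2 : Fin (t + 1 + 1) → Z) from
      fun p => rfl]
    simp_rw [key]
    simp
  have rhs : ∀ w, P u w * fAvoid P t w v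
      = ∑ y : Fin (t + 1) → Z,
          if (y 0 = w ∧ ∀ i, y i ≠ v) then P u w * pathProb P y else 0 := by
    intro w
    rw [fAvoid, Finset.sum_filter, Finset.mul_sum]
    exact Finset.sum_congr rfl fun y _ => by rw [mul_ite, mul_zero]
  rw [lhs]
  simp_rw [rhs]
  rw [Finset.sum_comm]
  refine Finset.sum_congr rfl fun y _ => ?_
  by_cases hy : ∀ i, y i ≠ v
  · simp [hy]
  · simp [hy]

lemma fAvoid_nonneg {Z : Type*} [Fintype Z] {P : Z → Z → ℝ} (hP : RowStochastic P)
    (t : ℕ) (u v : Z) : 0 ≤ fAvoid P t u v := by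
  refine Finset.sum_nonneg fun x _ => Finset.prod_nonneg fun i _ => hP.1 _ _

lemma fAvoid_le_one {Z : Type*} [Fintype Z] {P : Z → Z → ℝ} (hP : RowStochastic P) :
    ∀ (t : ℕ) (u v : Z), fAvoid P t u v ≤ 1 := by
  intro t
  induction t with
  | zero =>
    intro u v
    by_cases h : u = v
    · rw [h, fAvoid_self]; norm_num
    · rw [fAvoid_zero P u v h]
  | succ t ih =>
    intro u v
    by_cases h : u = v
    · rw [h, fAvoid_self]; norm_num
    · rw [fAvoid_succ P h]
      calc ∑ w, P u w * fAvoid P t w v ≤ ∑ w, P u w * 1 :=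
            Finset.sum_le_sum fun w _ =>
              mul_le_mul_of_nonneg_left (ih w v) (hP.1 u w)
        _ = 1 := by simp [hP.2 u]

lemma fAvoid_succ_le {Z : Type*} [Fintype Z] {P : Z → Z → ℝ} (hP : RowStochastic P) :
    ∀ (t : ℕ) (u v : Z), fAvoid P (t + 1) u v ≤ fAvoid P t u v := by
  intro t
  induction t with
  | zero =>
    intro u v
    by_cases h : u = v
    · rw [h, fAvoid_self, fAvoid_self]
    · rw [fAvoid_zero P u v h]; exact fAvoid_le_one hP 1 u v
  | succ t ih =>
    intro u v
    by_cases h : u = v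
    · rw [h, fAvoid_self, fAvoid_self]
    · rw [fAvoid_succ P h, fAvoid_succ P h]
      exact Finset.sum_le_sum fun w _ =>
        mul_le_mul_of_nonneg_left (ih w v) (hP.1 u w)

lemma fAvoid_anti {Z : Type*} [Fintype Z] {P : Z → Z → ℝ} (hP : RowStochastic P)
    {s t : ℕ} (h : s ≤ t) (u v : Z) : fAvoid P t u v ≤ fAvoid P s u v := by
  induction t with
  | zero => simp_all
  | succ t ih =>
    rcases Nat.lt_or_ge s (t + 1) with h' | h'
    · exact le_trans (fAvoid_succ_le hP t u v) (ih (by omega))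
    · have : s = t + 1 := by omega
      rw [this]

lemma pow_apply_nonneg {Z : Type*} [Fintype Z] [DecidableEq Z] {P : Z → Z → ℝ} (hP : RowStochastic P) :
    ∀ (k : ℕ) (a b : Z), 0 ≤ (Matrix.of P ^ k) a b := by
  intro k
  induction k with
  | zero =>
    intro a b
    rw [pow_zero]
    by_cases h : a = b <;> simp [Matrix.one_apply, h]
  | succ k ih =>
    intro a b
    rw [pow_succ, Matrix.mul_apply]
    exact Finset.sum_nonneg fun w _ => mul_nonneg (ih a w) (hP.1 w b)

lemma pow_row_sum {Z : Type*} [Fintype Z] [DecidableEq Z] {P : Z → Z → ℝ} (hP : RowStochastic P) :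
    ∀ (k : ℕ) (a : Z), ∑ b, (Matrix.of P ^ k) a b = 1 := by
  intro k
  induction k with
  | zero => intro a; simp [Matrix.one_apply]
  | succ k ih =>
    intro a
    simp_rw [pow_succ, Matrix.mul_apply]
    rw [Finset.sum_comm]
    calc ∑ w, ∑ b, (Matrix.of P ^ k) a w * (Matrix.of P) w b
        = ∑ w, (Matrix.of P ^ k) a w * ∑ b, P w b := by
          refine Finset.sum_congr rfl fun w _ => ?_
          rw [← Finset.mul_sum]
          simp only [Matrix.of_apply]
      _ = 1 := by simp_rw [hP.2]; simpa using ih a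

lemma pow_apply_le_one {Z : Type*} [Fintype Z] [DecidableEq Z] {P : Z → Z → ℝ} (hP : RowStochastic P)
    (k : ℕ) (a b : Z) : (Matrix.of P ^ k) a b ≤ 1 := by
  calc (Matrix.of P ^ k) a b ≤ ∑ c, (Matrix.of P ^ k) a c :=
        Finset.single_le_sum (fun c _ => pow_apply_nonneg hP k a c) (Finset.mem_univ b)
    _ = 1 := pow_row_sum hP k a

lemma fAvoid_add_pow_le {Z : Type*} [Fintype Z] [DecidableEq Z] {P : Z → Z → ℝ} (hP : RowStochastic P) :
    ∀ (k : ℕ) (u v : Z), u ≠ v → fAvoid P k u v + (Matrix.of P ^ k) u v ≤ 1 := by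
  intro k
  induction k with
  | zero =>
    intro u v h
    rw [fAvoid_zero P u v h, pow_zero, Matrix.one_apply, if_neg h]
    norm_num
  | succ k ih =>
    intro u v h
    rw [fAvoid_succ P h, pow_succ', Matrix.mul_apply, ← Finset.sum_add_distrib]
    have step : ∀ w : Z,
        P u w * fAvoid P k w v + (Matrix.of P) u w * (Matrix.of P ^ k) w v ≤ P u w := by
      intro w
      by_cases hw : w = v
      · rw [hw, fAvoid_self, mul_zero, zero_add]
        have h1 : (Matrix.of P ^ k) v v ≤ 1 := pow_apply_le_one hP k v v
        have h2 : (0:ℝ) ≤ P u v := hP.1 u v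
        calc (Matrix.of P) u v * (Matrix.of P ^ k) v v ≤ P u v * 1 :=
              mul_le_mul_of_nonneg_left h1 h2
          _ = P u v := mul_one _
        -- note hw rewrote w to v
      · have h3 := ih w v hw
        have h2 : (0:ℝ) ≤ P u w := hP.1 u w
        have : P u w * fAvoid P k w v + (Matrix.of P) u w * (Matrix.of P ^ k) w v
            = P u w * (fAvoid P k w v + (Matrix.of P ^ k) w v) := by
          simp only [Matrix.of_apply]; ring
        rw [this]
        calc P u w * (fAvoid P k w v + (Matrix.of P ^ k) w v) ≤ P u w * 1 :=
              mul_le_mul_of_nonneg_left h3 h2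
          _ = P u w := mul_one _
    calc ∑ w, (P u w * fAvoid P k w v + (Matrix.of P) u w * (Matrix.of P ^ k) w v)
        ≤ ∑ w, P u w := Finset.sum_le_sum fun w _ => step w
      _ = 1 := hP.2 u

lemma fAvoid_submul {Z : Type*} [Fintype Z] {P : Z → Z → ℝ} (hP : RowStochastic P) :
    ∀ (s t : ℕ) (u v : Z) (B : ℝ), 0 ≤ B → (∀ w, fAvoid P t w v ≤ B) →
      fAvoid P (s + t) u v ≤ fAvoid P s u v * B := by
  intro s
  induction s with
  | zero =>
    intro t u v B hB h
    rw [zero_add]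
    by_cases huv : u = v
    · rw [huv, fAvoid_self, fAvoid_self, zero_mul]
    · rw [fAvoid_zero P u v huv, one_mul]; exact h u
  | succ s ih =>
    intro t u v B hB h
    by_cases huv : u = v
    · rw [huv, fAvoid_self]
      exact mul_nonneg (fAvoid_nonneg hP _ _ _) hB
    · rw [show s + 1 + t = (s + t) + 1 from by omega, fAvoid_succ P huv, fAvoid_succ P huv,
        Finset.sum_mul]
      refine Finset.sum_le_sum fun w _ => ?_
      rw [mul_assoc]
      exact mul_le_mul_of_nonneg_left (ih t w v B hB h) (hP.1 u w)

theorem stmt_3 {Z : Type*} [Fintype Z] [Nonempty Z] [DecidableEq Z] (P : Z → Z → ℝ)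
    (hP : RowStochastic P) (hirr : IsIrreducibleChain P) :
    ∃ t₀ : ℕ, ∃ α β : ℝ, 0 < α ∧ 0 < β ∧ β < 1 ∧
      ∀ u v : Z, ∀ t : ℕ, t₀ ≤ t →
        ∑ x ∈ Finset.univ.filter
            (fun x : Fin (t + 1) → Z => x 0 = u ∧ ∀ i, x i ≠ v),
          pathProb P x ≤ β ^ (α * (t : ℝ)) := by
  classical
  choose m hm1 hmpos using hirr
  obtain ⟨z⟩ := (inferInstance : Nonempty Z)
  set N : ℕ := Finset.univ.sup (fun p : Z × Z => m p.1 p.2) with hNdef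
  have hmN : ∀ u v, m u v ≤ N := fun u v =>
    Finset.le_sup (f := fun p : Z × Z => m p.1 p.2) (Finset.mem_univ (u, v))
  have hN1 : 1 ≤ N := le_trans (hm1 z z) (hmN z z)
  set ε : ℝ := Finset.univ.inf' Finset.univ_nonempty
    (fun p : Z × Z => (Matrix.of P ^ m p.1 p.2) p.1 p.2) with hεdef
  have hε : 0 < ε := by
    rw [hεdef, Finset.lt_inf'_iff]
    exact fun p _ => hmpos p.1 p.2
  have hεle : ∀ u v, ε ≤ (Matrix.of P ^ m u v) u v := fun u v =>
    Finset.inf'_le _ (Finset.mem_univ (u, v))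
  set β : ℝ := max (1 - ε) (1 / 2) with hβdef
  have hβ0 : (0:ℝ) < β := lt_of_lt_of_le (by norm_num) (le_max_right _ _)
  have hβ1 : β < 1 := max_lt (by linarith) (by norm_num)
  have hkey : ∀ u v, fAvoid P N u v ≤ β := by
    intro u v
    by_cases huv : u = v
    · rw [huv, fAvoid_self]; exact hβ0.le
    · calc fAvoid P N u v ≤ fAvoid P (m u v) u v := fAvoid_anti hP (hmN u v) u v
        _ ≤ 1 - (Matrix.of P ^ m u v) u v :=
            le_sub_iff_add_le.mpr (fAvoid_add_pow_le hP (m u v) u v huv)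
        _ ≤ 1 - ε := by linarith [hεle u v]
        _ ≤ β := le_max_left _ _
  have hiter : ∀ k t, k * N ≤ t → ∀ u v : Z, fAvoid P t u v ≤ β ^ k := by
    intro k
    induction k with
    | zero => intro t _ u v; simpa using fAvoid_le_one hP t u v
    | succ k ih =>
      intro t ht u v
      have hNt : N ≤ t := le_trans
        (by calc N = 1 * N := (one_mul N).symm
              _ ≤ (k + 1) * N := Nat.mul_le_mul_right N (by omega)) ht
      have h2 : k * N ≤ t - N := by
        have : (k + 1) * N = k * N + N := by ring
        omega
      have hB : ∀ w, fAvoid P (t - N) w v ≤ β ^ k := fun w => ih _ h2 w v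
      have h1 : t = N + (t - N) := by omega
      rw [h1]
      calc fAvoid P (N + (t - N)) u v ≤ fAvoid P N u v * β ^ k :=
            fAvoid_submul hP N (t - N) u v (β ^ k) (pow_nonneg hβ0.le k) hB
        _ ≤ β * β ^ k := mul_le_mul_of_nonneg_right (hkey u v) (pow_nonneg hβ0.le k)
        _ = β ^ (k + 1) := (pow_succ' β k).symm
  refine ⟨2 * N, 1 / (2 * N), β, by positivity, hβ0, hβ1, ?_⟩
  intro u v t ht
  have hfa : ∑ x ∈ Finset.univ.filter
      (fun x : Fin (t + 1) → Z => x 0 = u ∧ ∀ i, x i ≠ v),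
      pathProb P x = fAvoid P t u v := by
    rw [fAvoid]
    congr 1
    congr!
  rw [hfa]
  set k := t / N with hkdef
  have hkN : k * N ≤ t := Nat.div_mul_le_self t N
  have h1 : fAvoid P t u v ≤ β ^ k := hiter k t hkN u v
  have hexp : (1 / (2 * (N:ℝ))) * t ≤ (k : ℝ) := by
    have hmod := Nat.div_add_mod t N
    have hmlt : t % N < N := Nat.mod_lt _ (by omega)
    have hc : (N:ℝ) * k + ((t % N : ℕ) : ℝ) = t := by exact_mod_cast hmod
    have hNr : (1:ℝ) ≤ N := by exact_mod_cast hN1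
    have hmr : ((t % N : ℕ) : ℝ) < (N:ℝ) := by exact_mod_cast hmlt
    have htr : (2:ℝ) * N ≤ t := by exact_mod_cast ht
    rw [div_mul_eq_mul_div, one_mul, div_le_iff₀ (by linarith)]
    nlinarith
  calc fAvoid P t u v ≤ β ^ k := h1
    _ = β ^ ((k:ℕ) : ℝ) := (Real.rpow_natCast β k).symm
    _ ≤ β ^ (1 / (2 * (N:ℝ)) * t) :=
        Real.rpow_le_rpow_of_exponent_ge hβ0 hβ1.le hexp
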